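/- For every s ∈ [0,1] the generating function Π(s) = ∑_{n=0}^∞ π_n s^n satisfies Π(s)·B_c(s) = π_0·[B_c(s) + s·(h − H(s))] + ∑_{k=1}^{c−1} π_k s^k (c−k) b_0 (1−s). In particular, if moreover ∑_{j≥2} (j−1) b_j < c·b_0 (so B_c(s) ≠ 0 for s ∈ [0,1)), then for every s ∈ [0,1): Π(s) = π_0·[1 + s(h − H(s))/B_c(s)] + (1/B_c(s))·∑_{k=1}^{c−1} π_k s^k (c−k) b_0 (1−s). -/

import Mathlib

/-!
Multiplying the balance equation of state `n ≥ 1` by `s ^ (n + 1)` and summing over `n`, the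
convolution terms assemble into the Cauchy product `(Π(s) - π₀) B(s)` and the service terms,
with `min n c` busy servers in state `n`, telescope against the factor `1 - s`. Replacing
`min n c` by `c` turns `B` into `B_c` at the cost of the finitely many states `k < c`, which is
the finite sum in the identity. For the explicit formula, `∑ b_j = 0` gives
`B(s) = ∑ b_j (s ^ j - s)`, and Bernoulli's inequality `s ^ j - s ≥ -(j - 1)(1 - s)` bounds
`B_c(s)` below by `(1 - s) (c b₀ - ∑ (j - 1) b_j) > 0`.
-/

open Set Filter Topology

/-- The generating function `B_i(s) = ∑_{j≥0} b_j s^j + (i-1) b_0 (1-s)`. -/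
noncomputable def Bi (b : ℕ → ℝ) (i : ℕ) (s : ℝ) : ℝ :=
  (∑' j : ℕ, b j * s ^ j) + ((i : ℝ) - 1) * b 0 * (1 - s)

/-- The generating function `H(s) = ∑_{j≥1} h_j s^j`. -/
noncomputable def Hgen (hh : ℕ → ℝ) (s : ℝ) : ℝ :=
  ∑' j : ℕ, hh (j + 1) * s ^ (j + 1)

open Finset

lemma sum_Icc_one_eq_sum_range {M : Type*} [AddCommMonoid M] (f : ℕ → M) (n : ℕ) :
    ∑ k ∈ Icc 1 n, f k = ∑ k ∈ range n, f (k + 1) := by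
  rw [← Finset.Ico_add_one_right_eq_Icc, Finset.range_eq_Ico, Finset.sum_Ico_add']

noncomputable def genFun (f : ℕ → ℝ) (s : ℝ) : ℝ := ∑' n, f n * s ^ n

section GeneratingFunction

variable {f g : ℕ → ℝ} {s : ℝ}

lemma summable_mul_pow (hf : Summable f) (hs : |s| ≤ 1) : Summable fun n => f n * s ^ n :=
  .of_norm_bounded hf.abs fun n => by
    rw [Real.norm_eq_abs, abs_mul, abs_pow]
    exact mul_le_of_le_one_right (abs_nonneg _) (pow_le_one₀ (abs_nonneg s) hs)

lemma genFun_eq_add_mul_genFun_succ (hf : Summable f) (hs : |s| ≤ 1) :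
    genFun f s = f 0 + s * genFun (fun n => f (n + 1)) s := by
  rw [genFun, (summable_mul_pow hf hs).tsum_eq_zero_add, genFun, ← tsum_mul_left]
  simp only [pow_zero, mul_one, pow_succ]
  congr 1
  exact tsum_congr fun n => by ring

lemma hasSum_sum_range_mul_pow (hf : Summable f) (hg : Summable g) (hs : |s| ≤ 1) :
    HasSum (fun n => (∑ k ∈ range (n + 1), f k * g (n - k)) * s ^ n) (genFun f s * genFun g s) := by
  have hnorm : ∀ {u : ℕ → ℝ}, Summable u → Summable fun n => ‖u n * s ^ n‖ := fun hu =>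
    (summable_mul_pow hu hs).abs
  have hterm : ∀ n, ∑ k ∈ range (n + 1), f k * s ^ k * (g (n - k) * s ^ (n - k)) =
      (∑ k ∈ range (n + 1), f k * g (n - k)) * s ^ n := fun n => by
    rw [sum_mul]
    refine sum_congr rfl fun k hk => ?_
    rw [← Nat.add_sub_of_le (mem_range_succ_iff.mp hk), pow_add, Nat.add_sub_cancel_left]
    ring
  have h := hasSum_sum_range_mul_of_summable_norm (hnorm hf) (hnorm hg)
  simp only [hterm] at h
  exact h

lemma Hgen_eq_mul_genFun (hh : ℕ → ℝ) (s : ℝ) :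
    Hgen hh s = s * genFun (fun j => hh (j + 1)) s := by
  rw [Hgen, genFun, ← tsum_mul_left]
  exact tsum_congr fun j => by ring

end GeneratingFunction

section Balance

variable {c : ℕ} {b hh π : ℕ → ℝ}

lemma balance_succ
    (heqmid : ∀ n : ℕ, 1 ≤ n → n ≤ c - 1 →
      hh n * π 0 + (∑ k ∈ Finset.Icc 1 (n - 1), b (n - k + 1) * π k) +
        (b 1 - ((n : ℝ) - 1) * b 0) * π n + ((n : ℝ) + 1) * b 0 * π (n + 1) = 0)
    (heqtail : ∀ n : ℕ, c ≤ n →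
      hh n * π 0 + (∑ k ∈ Finset.Icc 1 (n - 1), b (n - k + 1) * π k) +
        (b 1 - ((c : ℝ) - 1) * b 0) * π n + (c : ℝ) * b 0 * π (n + 1) = 0) (n : ℕ) :
    hh (n + 1) * π 0 + (∑ k ∈ range (n + 2), π (k + 1) * b (n + 1 - k)) +
      (((min (n + 2) c : ℕ) : ℝ) - 1) * b 0 * π (n + 2) =
      (((min (n + 1) c : ℕ) : ℝ) - 1) * b 0 * π (n + 1) := by
  have hconv : ∑ k ∈ range (n + 2), π (k + 1) * b (n + 1 - k) =
      (∑ k ∈ Finset.Icc 1 n, b (n + 1 - k + 1) * π k) + b 1 * π (n + 1) +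
        b 0 * π (n + 2) := by
    rw [sum_range_succ, sum_range_succ, sum_Icc_one_eq_sum_range]
    simp only [Nat.sub_self, Nat.add_sub_cancel_left, Nat.add_sub_add_right, mul_comm (b _)]
    congr 2
    exact sum_congr rfl fun k hk => by
      rw [show n - k + 1 = n + 1 - k by have := Finset.mem_range.mp hk; omega]
  rcases le_or_gt (n + 1) (c - 1) with hmid | htail
  · have hbal := heqmid (n + 1) (by omega) hmid
    rw [min_eq_left (by omega : n + 1 ≤ c), min_eq_left (by omega : n + 2 ≤ c)]
    push_cast at hbal ⊢
    linear_combination hbal + hconv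
  · have hbal := heqtail (n + 1) (by omega)
    rw [Nat.add_sub_cancel] at hbal
    rw [min_eq_right (by omega : c ≤ n + 1), min_eq_right (by omega : c ≤ n + 2)]
    linear_combination hbal + hconv

end Balance

section GeneratingFunctionIdentity

variable {c : ℕ} {b hh π : ℕ → ℝ} {s : ℝ}

lemma summable_busy_mul (hπ : Summable π) :
    Summable fun k => (((min (k + 1) c : ℕ) : ℝ) - 1) * b 0 * π (k + 1) := by
  refine .of_norm_bounded
    (((summable_nat_add_iff 1).2 hπ).abs.mul_left (((c : ℝ) + 1) * |b 0|)) fun k => ?_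
  have hmin : ((min (k + 1) c : ℕ) : ℝ) ≤ c := by exact_mod_cast min_le_right _ _
  have hbusy : |((min (k + 1) c : ℕ) : ℝ) - 1| ≤ c + 1 := by
    rw [abs_le]; constructor <;> linarith [(Nat.cast_nonneg _ : (0 : ℝ) ≤ (min (k + 1) c : ℕ))]
  rw [Real.norm_eq_abs, abs_mul, abs_mul]
  gcongr

lemma genFun_succ_mul_add_one_sub_mul_genFun_busy (hc : 1 ≤ c) (hb : Summable b)
    (hhsum : Summable fun j => hh (j + 1)) (hπ : Summable π)
    (heq0 : -(∑' j : ℕ, hh (j + 1)) * π 0 + b 0 * π 1 = 0)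
    (hbal : ∀ n : ℕ, hh (n + 1) * π 0 + (∑ k ∈ range (n + 2), π (k + 1) * b (n + 1 - k)) +
      (((min (n + 2) c : ℕ) : ℝ) - 1) * b 0 * π (n + 2) =
      (((min (n + 1) c : ℕ) : ℝ) - 1) * b 0 * π (n + 1))
    (hs : |s| ≤ 1) :
    genFun (fun k => π (k + 1)) s * genFun b s +
        (1 - s) * genFun (fun k => (((min (k + 1) c : ℕ) : ℝ) - 1) * b 0 * π (k + 1)) s =
      π 0 * ((∑' j : ℕ, hh (j + 1)) - Hgen hh s) := by
  set v := fun k => (((min (k + 1) c : ℕ) : ℝ) - 1) * b 0 * π (k + 1)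
  have hF : HasSum (fun n => ((∑ k ∈ range (n + 1), π (k + 1) * b (n - k)) + v n) * s ^ n)
      (genFun (fun k => π (k + 1)) s * genFun b s + genFun v s) := by
    simp only [add_mul]
    exact (hasSum_sum_range_mul_pow ((summable_nat_add_iff 1).2 hπ) hb hs).add
      (summable_mul_pow (summable_busy_mul hπ) hs).hasSum
  have hFsucc : HasSum (fun n => ((∑ k ∈ range (n + 2), π (k + 1) * b (n + 1 - k)) + v (n + 1)) *
      s ^ (n + 1)) (s * genFun v s - π 0 * Hgen hh s) := by
    have hterm : (fun n => ((∑ k ∈ range (n + 2), π (k + 1) * b (n + 1 - k)) + v (n + 1)) *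
        s ^ (n + 1)) = fun n => s * (v n * s ^ n) - π 0 * s * (hh (n + 1) * s ^ n) := by
      funext n
      linear_combination s ^ (n + 1) * hbal n
    rw [hterm, Hgen_eq_mul_genFun, ← mul_assoc]
    exact ((summable_mul_pow (summable_busy_mul hπ) hs).hasSum.mul_left s).sub
      ((summable_mul_pow hhsum hs).hasSum.mul_left (π 0 * s))
  have hcompare := ((hasSum_nat_add_iff' 1).mpr hF).unique hFsucc
  simp only [Finset.range_one, sum_singleton, zero_add, Nat.sub_self, pow_zero, mul_one, v,
    min_eq_left hc, Nat.cast_one, sub_self, zero_mul, add_zero] at hcompare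
  linear_combination hcompare + heq0

lemma genFun_mul_Bi (hc : 1 ≤ c) (hb : Summable b)
    (hhsum : Summable fun j => hh (j + 1)) (hπ : Summable π)
    (heq0 : -(∑' j : ℕ, hh (j + 1)) * π 0 + b 0 * π 1 = 0)
    (hbal : ∀ n : ℕ, hh (n + 1) * π 0 + (∑ k ∈ range (n + 2), π (k + 1) * b (n + 1 - k)) +
      (((min (n + 2) c : ℕ) : ℝ) - 1) * b 0 * π (n + 2) =
      (((min (n + 1) c : ℕ) : ℝ) - 1) * b 0 * π (n + 1))
    (hs : |s| ≤ 1) :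
    genFun π s * Bi b c s =
      π 0 * (Bi b c s + s * ((∑' j : ℕ, hh (j + 1)) - Hgen hh s)) +
        ∑ k ∈ Finset.Icc 1 (c - 1), π k * s ^ k * ((c : ℝ) - (k : ℝ)) * b 0 * (1 - s) := by
  have hidle : ((c : ℝ) - 1) * b 0 * genFun (fun k => π (k + 1)) s -
      genFun (fun k => (((min (k + 1) c : ℕ) : ℝ) - 1) * b 0 * π (k + 1)) s =
      ∑ k ∈ range (c - 1), ((c : ℝ) - (k + 1)) * b 0 * π (k + 1) * s ^ k := by
    rw [genFun, genFun, ← tsum_mul_left, ← Summable.tsum_sub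
      ((summable_mul_pow ((summable_nat_add_iff 1).2 hπ) hs).mul_left _)
      (summable_mul_pow (summable_busy_mul hπ) hs)]
    rw [tsum_eq_sum (s := range (c - 1)) fun k hk => by
      rw [min_eq_right (by simp only [Finset.mem_range] at hk; omega)]; ring]
    refine sum_congr rfl fun k hk => ?_
    rw [min_eq_left (by simp only [Finset.mem_range] at hk; omega)]
    push_cast
    ring
  have hshift : ∑ k ∈ Finset.Icc 1 (c - 1), π k * s ^ k * ((c : ℝ) - (k : ℝ)) * b 0 * (1 - s) =
      s * (1 - s) * ∑ k ∈ range (c - 1), ((c : ℝ) - (k + 1)) * b 0 * π (k + 1) * s ^ k := by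
    rw [sum_Icc_one_eq_sum_range, mul_sum]
    refine sum_congr rfl fun k _ => ?_
    push_cast
    ring
  rw [genFun_eq_add_mul_genFun_succ hπ hs, hshift]
  change _ * (genFun b s + _) = _ * (genFun b s + _ + _) + _
  linear_combination s * genFun_succ_mul_add_one_sub_mul_genFun_busy hc hb hhsum hπ heq0 hbal hs +
    s * (1 - s) * hidle

end GeneratingFunctionIdentity

section Stability

variable {b : ℕ → ℝ} {s : ℝ}

lemma neg_mul_one_sub_le_pow_sub (n : ℕ) (hs0 : 0 ≤ s) (hs1 : s ≤ 1) :
    -(((n : ℝ) + 1) * (1 - s)) ≤ s ^ (n + 2) - s := by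
  have hbernoulli := one_add_mul_le_pow (by linarith : (-2 : ℝ) ≤ s - 1) (n + 1)
  rw [add_sub_cancel] at hbernoulli
  push_cast at hbernoulli
  have hn : (0 : ℝ) ≤ (n + 1) * (1 - s) := by positivity
  rw [pow_succ]
  nlinarith [mul_nonneg hs0 (sub_nonneg.2 hbernoulli), mul_nonneg hn (sub_nonneg.2 hs1)]

lemma one_sub_mul_le_genFun (hb2 : ∀ j, 0 ≤ b (j + 2)) (hbsum : Summable b)
    (hbzero : ∑' j, b j = 0) (hM : Summable fun j : ℕ => ((j : ℝ) + 1) * b (j + 2))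
    (hs0 : 0 ≤ s) (hs1 : s ≤ 1) :
    (1 - s) * (b 0 - ∑' j : ℕ, ((j : ℝ) + 1) * b (j + 2)) ≤ genFun b s := by
  have hs : |s| ≤ 1 := abs_le.mpr ⟨by linarith, hs1⟩
  have hsum : Summable fun j => b j * (s ^ j - s) := by
    simpa only [mul_sub] using (summable_mul_pow hbsum hs).sub (hbsum.mul_right s)
  have hcentered : genFun b s = b 0 * (1 - s) + ∑' j, b (j + 2) * (s ^ (j + 2) - s) := by
    calc genFun b s = ∑' j, b j * (s ^ j - s) := by
          rw [tsum_congr fun j => mul_sub (b j) _ s, Summable.tsum_sub (summable_mul_pow hbsum hs)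
            (hbsum.mul_right s), tsum_mul_right, hbzero, zero_mul, sub_zero, genFun]
      _ = b 0 * (1 - s) + ∑' j, b (j + 2) * (s ^ (j + 2) - s) := by
          rw [← hsum.sum_add_tsum_nat_add 2]
          simp [Finset.sum_range_succ]
  have hterm : ∀ j : ℕ, -(1 - s) * (((j : ℝ) + 1) * b (j + 2)) ≤ b (j + 2) * (s ^ (j + 2) - s) :=
    fun j => by nlinarith [neg_mul_one_sub_le_pow_sub j hs0 hs1, hb2 j]
  have htail := Summable.tsum_le_tsum hterm (hM.mul_left _) ((summable_nat_add_iff 2).2 hsum)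
  rw [tsum_mul_left] at htail
  rw [hcentered]
  linarith

lemma Bi_pos {c : ℕ} (hb2 : ∀ j, 0 ≤ b (j + 2)) (hbsum : Summable b) (hbzero : ∑' j, b j = 0)
    (hM : Summable fun j : ℕ => ((j : ℝ) + 1) * b (j + 2))
    (hMlt : ∑' j : ℕ, ((j : ℝ) + 1) * b (j + 2) < c * b 0) (hs0 : 0 ≤ s) (hs1 : s < 1) :
    0 < Bi b c s := by
  have hlow := one_sub_mul_le_genFun hb2 hbsum hbzero hM hs0 hs1.le
  have hdrift : 0 < (1 - s) * (c * b 0 - ∑' j : ℕ, ((j : ℝ) + 1) * b (j + 2)) :=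
    mul_pos (by linarith) (by linarith)
  change 0 < genFun b s + _
  linarith

end Stability

theorem stmt11_general (c : ℕ) (hc : 1 ≤ c) (b : ℕ → ℝ)
    (hbnn : ∀ j : ℕ, j ≠ 1 → 0 ≤ b j)
    (hbsum : Summable b) (hbzero : (∑' j : ℕ, b j) = 0)
    (hh : ℕ → ℝ)
    (hhsum : Summable (fun j : ℕ => hh (j + 1)))
    (π : ℕ → ℝ) (hπsum : Summable π)
    (heq0 : -(∑' j : ℕ, hh (j + 1)) * π 0 + b 0 * π 1 = 0)
    (heqmid : ∀ n : ℕ, 1 ≤ n → n ≤ c - 1 →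
      hh n * π 0 + (∑ k ∈ Finset.Icc 1 (n - 1), b (n - k + 1) * π k) +
        (b 1 - ((n : ℝ) - 1) * b 0) * π n + ((n : ℝ) + 1) * b 0 * π (n + 1) = 0)
    (heqtail : ∀ n : ℕ, c ≤ n →
      hh n * π 0 + (∑ k ∈ Finset.Icc 1 (n - 1), b (n - k + 1) * π k) +
        (b 1 - ((c : ℝ) - 1) * b 0) * π n + (c : ℝ) * b 0 * π (n + 1) = 0) :
    (∀ s ∈ Set.Icc (0 : ℝ) 1,
      (∑' n : ℕ, π n * s ^ n) * Bi b c s =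
        π 0 * (Bi b c s + s * ((∑' j : ℕ, hh (j + 1)) - Hgen hh s)) +
          ∑ k ∈ Finset.Icc 1 (c - 1),
            π k * s ^ k * ((c : ℝ) - (k : ℝ)) * b 0 * (1 - s)) ∧
    ((Summable (fun j : ℕ => ((j : ℝ) + 1) * b (j + 2)) ∧
        (∑' j : ℕ, ((j : ℝ) + 1) * b (j + 2)) < (c : ℝ) * b 0) →
      ∀ s ∈ Set.Ico (0 : ℝ) 1,
        (∑' n : ℕ, π n * s ^ n) =
          π 0 * (1 + s * ((∑' j : ℕ, hh (j + 1)) - Hgen hh s) / Bi b c s) +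
            (1 / Bi b c s) *
              ∑ k ∈ Finset.Icc 1 (c - 1),
                π k * s ^ k * ((c : ℝ) - (k : ℝ)) * b 0 * (1 - s)) := by
  have hbal := balance_succ heqmid heqtail
  refine ⟨fun s hs => genFun_mul_Bi hc hbsum hhsum hπsum heq0 hbal
    (abs_le.mpr ⟨by linarith [hs.1], hs.2⟩), ?_⟩
  rintro ⟨hM, hMlt⟩ s ⟨hs0, hs1⟩
  have hpos := Bi_pos (fun j => hbnn (j + 2) (by omega)) hbsum hbzero hM hMlt hs0 hs1
  have hident := genFun_mul_Bi hc hbsum hhsum hπsum heq0 hbal (abs_le.mpr ⟨by linarith, hs1.le⟩)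
  rw [genFun] at hident
  field_simp
  linear_combination hident

theorem stmt11 (c : ℕ) (hc : 1 ≤ c) (b : ℕ → ℝ)
    (hbnn : ∀ j : ℕ, j ≠ 1 → 0 ≤ b j) (hb0 : 0 < b 0)
    (hbsum : Summable b) (hbzero : (∑' j : ℕ, b j) = 0)
    (hb2 : 0 < ∑' j : ℕ, b (j + 2))
    (hh : ℕ → ℝ) (hhnn : ∀ j : ℕ, 0 ≤ hh (j + 1))
    (hhsum : Summable (fun j : ℕ => hh (j + 1)))
    (hhpos : 0 < ∑' j : ℕ, hh (j + 1))
    (π : ℕ → ℝ) (hπnn : ∀ n : ℕ, 0 ≤ π n) (hπsum : Summable π)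
    (heq0 : -(∑' j : ℕ, hh (j + 1)) * π 0 + b 0 * π 1 = 0)
    (heqmid : ∀ n : ℕ, 1 ≤ n → n ≤ c - 1 →
      hh n * π 0 + (∑ k ∈ Finset.Icc 1 (n - 1), b (n - k + 1) * π k) +
        (b 1 - ((n : ℝ) - 1) * b 0) * π n + ((n : ℝ) + 1) * b 0 * π (n + 1) = 0)
    (heqtail : ∀ n : ℕ, c ≤ n →
      hh n * π 0 + (∑ k ∈ Finset.Icc 1 (n - 1), b (n - k + 1) * π k) +
        (b 1 - ((c : ℝ) - 1) * b 0) * π n + (c : ℝ) * b 0 * π (n + 1) = 0) :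
    (∀ s ∈ Set.Icc (0 : ℝ) 1,
      (∑' n : ℕ, π n * s ^ n) * Bi b c s =
        π 0 * (Bi b c s + s * ((∑' j : ℕ, hh (j + 1)) - Hgen hh s)) +
          ∑ k ∈ Finset.Icc 1 (c - 1),
            π k * s ^ k * ((c : ℝ) - (k : ℝ)) * b 0 * (1 - s)) ∧
    ((Summable (fun j : ℕ => ((j : ℝ) + 1) * b (j + 2)) ∧
        (∑' j : ℕ, ((j : ℝ) + 1) * b (j + 2)) < (c : ℝ) * b 0) →
      ∀ s ∈ Set.Ico (0 : ℝ) 1,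
        (∑' n : ℕ, π n * s ^ n) =
          π 0 * (1 + s * ((∑' j : ℕ, hh (j + 1)) - Hgen hh s) / Bi b c s) +
            (1 / Bi b c s) *
              ∑ k ∈ Finset.Icc 1 (c - 1),
                π k * s ^ k * ((c : ℝ) - (k : ℝ)) * b 0 * (1 - s)) :=
  stmt11_general c hc b hbnn hbsum hbzero hh hhsum π hπsum heq0 heqmid heqtail
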